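/- arXiv:2101.05575 — 2 statements merged into one kernel-verified Lean document; each statement's English description precedes it below -/
import Mathlib

section
/- Let H be a Hopf algebra, A a left H-module algebra, and Q a Hopf algebra acting on A ⋊ H making it a Q-module algebra such that the subalgebra A (embedded as a ⋊ 1) is fixed pointwise (q·(a ⋊ 1) = ε(q)(a ⋊ 1)). Then for every q ∈ Q and h ∈ H, the element V⁻¹(h₁)·(q·(1 ⋊ h₂)) lies in the commutant A′ ∩ (A ⋊ H) of A in A ⋊ H, where V⁻¹(h) = 1 ⋊ S(h). -/
open TensorProduct LinearMap

noncomputable section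

variable (k : Type*) [Field k]

/-- Convolution product of two linear maps from a coalgebra `H` to an algebra `B`. -/
def conv {H B : Type*} [AddCommMonoid H] [Module k H] [CoalgebraStruct k H]
    [Ring B] [Algebra k B] (f g : H →ₗ[k] B) : H →ₗ[k] B :=
  LinearMap.mul' k B ∘ₗ TensorProduct.map f g ∘ₗ CoalgebraStruct.comul

variable (H A : Type*) [Ring H] [HopfAlgebra k H] [Ring A] [Algebra k A]

/-- The uncurried version of an action map. -/
def actU (act : H →ₗ[k] A →ₗ[k] A) : H ⊗[k] A →ₗ[k] A := TensorProduct.lift act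

/-- `A` is a left `H`-module algebra via `act`. The measuring condition
`h • (a b) = (h₁ • a)(h₂ • b)` is expressed at the level of linear maps. -/
structure IsModAlg (act : H →ₗ[k] A →ₗ[k] A) : Prop where
  act_one : act 1 = LinearMap.id
  act_mul : ∀ h g : H, act (h * g) = act h ∘ₗ act g
  smul_mul :
    actU k H A act ∘ₗ lTensor H (LinearMap.mul' k A)
      = LinearMap.mul' k A
          ∘ₗ TensorProduct.map (actU k H A act) (actU k H A act)
          ∘ₗ (TensorProduct.tensorTensorTensorComm k H H A A).toLinearMap
          ∘ₗ rTensor (A ⊗[k] A) (Coalgebra.comul (R := k))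
  smul_one : ∀ h : H, act h 1 = Coalgebra.counit (R := k) h • (1 : A)

variable (B : Type*) [Ring B] [Algebra k B]

/-- `B` is the smash product `A ⋊ H`, with `ιA a = a ⋊ 1`, `ιH h = 1 ⋊ h`,
`e (a ⊗ h) = a ⋊ h`, and the straightening rule `(1 ⋊ h)(a ⋊ 1) = (h₁ • a) ⋊ h₂`. -/
structure IsSmash (act : H →ₗ[k] A →ₗ[k] A) (ιA : A →ₐ[k] B) (ιH : H →ₐ[k] B)
    (e : A ⊗[k] H ≃ₗ[k] B) : Prop where
  isModAlg : IsModAlg k H A act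
  e_tmul : ∀ (a : A) (h : H), e (a ⊗ₜ[k] h) = ιA a * ιH h
  straighten :
    LinearMap.mul' k B ∘ₗ TensorProduct.map ιH.toLinearMap ιA.toLinearMap
      = LinearMap.mul' k B
          ∘ₗ TensorProduct.map (ιA.toLinearMap ∘ₗ actU k H A act) ιH.toLinearMap
          ∘ₗ (TensorProduct.assoc k H A H).symm.toLinearMap
          ∘ₗ lTensor H (TensorProduct.comm k H A).toLinearMap
          ∘ₗ (TensorProduct.assoc k H H A).toLinearMap
          ∘ₗ rTensor A (Coalgebra.comul (R := k))

/-- The endomorphism `a ⋊ h ↦ (a ⋊ h₁) ψ(h₂)` of the smash product `B`. -/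
def inducedEnd (ιA : A →ₐ[k] B) (ιH : H →ₐ[k] B) (e : A ⊗[k] H ≃ₗ[k] B)
    (ψ : H →ₗ[k] B) : B →ₗ[k] B :=
  LinearMap.mul' k B
    ∘ₗ TensorProduct.map
        (LinearMap.mul' k B ∘ₗ TensorProduct.map ιA.toLinearMap ιH.toLinearMap) ψ
    ∘ₗ (TensorProduct.assoc k A H H).symm.toLinearMap
    ∘ₗ lTensor A (Coalgebra.comul (R := k))
    ∘ₗ e.symm.toLinearMap

/-- The space of `A`-bimodule endomorphisms of `B`, where `A` acts through `ιA`. -/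
def bimodEnd (ιA : A →ₐ[k] B) : Submodule k (B →ₗ[k] B) where
  carrier := {f | ∀ (a : A) (x : B), f (ιA a * x) = ιA a * f x ∧ f (x * ιA a) = f x * ιA a}
  add_mem' := by
    intro f g hf hg a x
    refine ⟨?_, ?_⟩ <;>
      simp [LinearMap.add_apply, (hf a x).1, (hg a x).1, (hf a x).2, (hg a x).2,
        mul_add, add_mul]
  zero_mem' := by intro a x; simp
  smul_mem' := by
    intro c f hf a x
    refine ⟨?_, ?_⟩ <;>
      simp [LinearMap.smul_apply, (hf a x).1, (hf a x).2, mul_smul_comm, smul_mul_assoc]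


section ConvLemmas

variable {C B : Type*} [AddCommMonoid C] [Module k C] [Coalgebra k C]
  [Ring B] [Algebra k B]

lemma conv_repr {ι : Type*} (f g : C →ₗ[k] B) (x : C) (r : Coalgebra.Repr k x ι) :
    conv k f g x = ∑ i ∈ r.index, f (r.left i) * g (r.right i) := by
  simp only [conv, LinearMap.comp_apply, ← r.eq, map_sum, TensorProduct.map_tmul,
    LinearMap.mul'_apply]

lemma conv_mulRight (f g : C →ₗ[k] B) (c : B) :
    conv k f (LinearMap.mulRight k c ∘ₗ g) = LinearMap.mulRight k c ∘ₗ conv k f g := by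
  ext x
  rw [LinearMap.comp_apply, conv_repr k f g x (Coalgebra.Repr.arbitrary k x),
    conv_repr k f _ x (Coalgebra.Repr.arbitrary k x)]
  simp [Finset.sum_mul, mul_assoc]

lemma conv_mulLeft (f g : C →ₗ[k] B) (c : B) :
    conv k (LinearMap.mulLeft k c ∘ₗ f) g = LinearMap.mulLeft k c ∘ₗ conv k f g := by
  ext x
  rw [LinearMap.comp_apply, conv_repr k _ g x (Coalgebra.Repr.arbitrary k x),
    conv_repr k f g x (Coalgebra.Repr.arbitrary k x)]
  simp [Finset.mul_sum, mul_assoc]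

def cunit : C →ₗ[k] B := Algebra.linearMap k B ∘ₗ Coalgebra.counit

lemma conv_cunit (f : C →ₗ[k] B) : conv k f (cunit k) = f := by
  ext x
  set r := Coalgebra.Repr.arbitrary k x
  have h2 := Coalgebra.sum_tmul_counit_eq (R := k) r
  have h3 := congrArg (LinearMap.mul' k B ∘ₗ TensorProduct.map f (Algebra.linearMap k B)) h2
  simp only [map_sum, LinearMap.comp_apply, TensorProduct.map_tmul, LinearMap.mul'_apply,
    map_one, mul_one] at h3
  rw [conv_repr k f _ x r]
  simpa [cunit] using h3

lemma cunit_conv (f : C →ₗ[k] B) : conv k (cunit k) f = f := by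
  ext x
  set r := Coalgebra.Repr.arbitrary k x
  have h2 := Coalgebra.sum_counit_tmul_eq (R := k) r
  have h3 := congrArg (LinearMap.mul' k B ∘ₗ TensorProduct.map (Algebra.linearMap k B) f) h2
  simp only [map_sum, LinearMap.comp_apply, TensorProduct.map_tmul, LinearMap.mul'_apply,
    map_one, one_mul] at h3
  rw [conv_repr k _ f x r]
  simpa [cunit] using h3

lemma conv_assoc (f g h : C →ₗ[k] B) :
    conv k (conv k f g) h = conv k f (conv k g h) := by
  ext x
  set r := Coalgebra.Repr.arbitrary k x with hr
  set a₁ : (i : C × C) → Coalgebra.Repr k (r.left i) (C × C) :=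
    fun i => Coalgebra.Repr.arbitrary k (r.left i) with ha₁
  set a₂ : (i : C × C) → Coalgebra.Repr k (r.right i) (C × C) :=
    fun i => Coalgebra.Repr.arbitrary k (r.right i) with ha₂
  have key := Coalgebra.sum_map_tmul_tmul_eq (R := k) f g h x (repr := r) (a₁ := a₁) (a₂ := a₂)
  have key2 := congrArg (LinearMap.mul' k B ∘ₗ LinearMap.lTensor B (LinearMap.mul' k B)) key
  simp only [map_sum, LinearMap.comp_apply, LinearMap.lTensor_tmul, LinearMap.mul'_apply] at key2
  rw [conv_repr k (conv k f g) h x r, conv_repr k f (conv k g h) x r]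
  calc ∑ i ∈ r.index, conv k f g (r.left i) * h (r.right i)
      = ∑ i ∈ r.index, ∑ j ∈ (a₁ i).index,
          f ((a₁ i).left j) * ((g ((a₁ i).right j)) * h (r.right i)) := by
        refine Finset.sum_congr rfl fun i _ => ?_
        rw [conv_repr k f g _ (a₁ i), Finset.sum_mul]
        simp [mul_assoc]
    _ = ∑ i ∈ r.index, ∑ j ∈ (a₂ i).index,
          f (r.left i) * (g ((a₂ i).left j) * h ((a₂ i).right j)) := key2.symm
    _ = ∑ i ∈ r.index, f (r.left i) * conv k g h (r.right i) := by
        refine Finset.sum_congr rfl fun i _ => ?_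
        rw [conv_repr k g h _ (a₂ i), Finset.mul_sum]

end ConvLemmas

section Antipode

variable {H B : Type*} [Ring H] [HopfAlgebra k H] [Ring B] [Algebra k B]

lemma conv_antipode (φ : H →ₐ[k] B) :
    conv k (φ.toLinearMap ∘ₗ HopfAlgebra.antipode (R := k)) φ.toLinearMap = cunit k := by
  ext x
  set r := Coalgebra.Repr.arbitrary k x
  rw [conv_repr k _ _ x r]
  have h1 := HopfAlgebra.sum_antipode_mul_eq_algebraMap_counit (R := k) r
  simp only [LinearMap.comp_apply, AlgHom.toLinearMap_apply, ← map_mul, ← map_sum]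
  rw [h1]
  simp [cunit, AlgHom.commutes]

lemma antipode_conv (φ : H →ₐ[k] B) :
    conv k φ.toLinearMap (φ.toLinearMap ∘ₗ HopfAlgebra.antipode (R := k)) = cunit k := by
  ext x
  set r := Coalgebra.Repr.arbitrary k x
  rw [conv_repr k _ _ x r]
  have h1 := HopfAlgebra.sum_mul_antipode_eq_algebraMap_counit (R := k) r
  simp only [LinearMap.comp_apply, AlgHom.toLinearMap_apply, ← map_mul, ← map_sum]
  rw [h1]
  simp [cunit, AlgHom.commutes]

lemma mulRight_cunit (c : B) :
    LinearMap.mulRight k c ∘ₗ (cunit k (C := H)) = LinearMap.mulLeft k c ∘ₗ cunit k := by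
  ext x
  simp [cunit, Algebra.commutes]

end Antipode

section SmashLemmas

variable (H A : Type*) [Ring H] [HopfAlgebra k H] [Ring A] [Algebra k A]
variable (B : Type*) [Ring B] [Algebra k B]

lemma straighten_pointwise (act : H →ₗ[k] A →ₗ[k] A) (ιA : A →ₐ[k] B) (ιH : H →ₐ[k] B)
    (e : A ⊗[k] H ≃ₗ[k] B) (hs : IsSmash k H A B act ιA ιH e) (a : A) :
    LinearMap.mulRight k (ιA a) ∘ₗ ιH.toLinearMap
      = conv k (ιA.toLinearMap ∘ₗ act.flip a) ιH.toLinearMap := by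
  ext h
  set r := Coalgebra.Repr.arbitrary k h with hrdef
  have h0 := LinearMap.congr_fun hs.straighten (h ⊗ₜ[k] a)
  simp only [LinearMap.comp_apply, LinearMap.rTensor_tmul] at h0
  rw [← r.eq] at h0
  simp only [TensorProduct.sum_tmul, map_sum, LinearEquiv.coe_coe,
    TensorProduct.assoc_tmul, LinearMap.lTensor_tmul, TensorProduct.comm_tmul,
    TensorProduct.assoc_symm_tmul, TensorProduct.map_tmul, LinearMap.mul'_apply,
    AlgHom.toLinearMap_apply, LinearMap.comp_apply, actU, TensorProduct.lift.tmul] at h0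
  rw [LinearMap.comp_apply, LinearMap.mulRight_apply, conv_repr k _ _ h r]
  simp only [LinearMap.comp_apply, LinearMap.flip_apply, AlgHom.toLinearMap_apply]
  exact h0

variable (Q : Type*) [Ring Q] [HopfAlgebra k Q]

lemma qact_mul_pointwise (qact : Q →ₗ[k] B →ₗ[k] B) (hq : IsModAlg k Q B qact)
    {ι : Type*} (q : Q) (x y : B) (rq : Coalgebra.Repr k q ι) :
    qact q (x * y) = ∑ i ∈ rq.index, qact (rq.left i) x * qact (rq.right i) y := by
  have h0 := LinearMap.congr_fun hq.smul_mul (q ⊗ₜ[k] (x ⊗ₜ[k] y))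
  simp only [LinearMap.comp_apply, LinearMap.lTensor_tmul, LinearMap.mul'_apply,
    LinearMap.rTensor_tmul] at h0
  rw [← rq.eq] at h0
  simp only [TensorProduct.sum_tmul, map_sum, LinearEquiv.coe_coe,
    TensorProduct.tensorTensorTensorComm_tmul, TensorProduct.map_tmul,
    LinearMap.mul'_apply, actU, TensorProduct.lift.tmul] at h0
  exact h0

lemma qact_fix_right (qact : Q →ₗ[k] B →ₗ[k] B) (hq : IsModAlg k Q B qact)
    (ιA : A →ₐ[k] B)
    (hfix : ∀ (q : Q) (a : A), qact q (ιA a) = Coalgebra.counit (R := k) q • ιA a)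
    (q : Q) (x : B) (a : A) :
    qact q (x * ιA a) = qact q x * ιA a := by
  set rq := Coalgebra.Repr.arbitrary k q with hrq
  rw [qact_mul_pointwise k B Q qact hq q x (ιA a) rq]
  have h2 := Coalgebra.sum_map_tmul_counit_eq (R := k) (qact.flip x) q (repr := rq)
  have h3 := congrArg (TensorProduct.rid k B) h2
  simp only [map_sum, TensorProduct.rid_tmul, LinearMap.flip_apply, one_smul] at h3
  calc ∑ i ∈ rq.index, qact (rq.left i) x * qact (rq.right i) (ιA a)
      = ∑ i ∈ rq.index, Coalgebra.counit (R := k) (rq.right i) • (qact (rq.left i) x * ιA a) := by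
        refine Finset.sum_congr rfl fun i _ => ?_
        rw [hfix, mul_smul_comm]
    _ = (∑ i ∈ rq.index, Coalgebra.counit (R := k) (rq.right i) • qact (rq.left i) x) * ιA a := by
        rw [Finset.sum_mul]
        exact Finset.sum_congr rfl fun i _ => (smul_mul_assoc _ _ _).symm
    _ = qact q x * ιA a := by rw [h3]

lemma qact_fix_left (qact : Q →ₗ[k] B →ₗ[k] B) (hq : IsModAlg k Q B qact)
    (ιA : A →ₐ[k] B)
    (hfix : ∀ (q : Q) (a : A), qact q (ιA a) = Coalgebra.counit (R := k) q • ιA a)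
    (q : Q) (x : B) (a : A) :
    qact q (ιA a * x) = ιA a * qact q x := by
  set rq := Coalgebra.Repr.arbitrary k q with hrq
  rw [qact_mul_pointwise k B Q qact hq q (ιA a) x rq]
  have h2 := Coalgebra.sum_counit_tmul_map_eq (R := k) (qact.flip x) q (repr := rq)
  have h3 := congrArg (TensorProduct.lid k B) h2
  simp only [map_sum, TensorProduct.lid_tmul, LinearMap.flip_apply, one_smul] at h3
  calc ∑ i ∈ rq.index, qact (rq.left i) (ιA a) * qact (rq.right i) x
      = ∑ i ∈ rq.index, Coalgebra.counit (R := k) (rq.left i) • (ιA a * qact (rq.right i) x) := by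
        refine Finset.sum_congr rfl fun i _ => ?_
        rw [hfix, smul_mul_assoc]
    _ = ιA a * (∑ i ∈ rq.index, Coalgebra.counit (R := k) (rq.left i) • qact (rq.right i) x) := by
        rw [Finset.mul_sum]
        exact Finset.sum_congr rfl fun i _ => (mul_smul_comm _ _ _).symm
    _ = ιA a * qact q x := by rw [h3]

lemma step2 (act : H →ₗ[k] A →ₗ[k] A) (ιA : A →ₐ[k] B) (ιH : H →ₐ[k] B)
    (e : A ⊗[k] H ≃ₗ[k] B) (hs : IsSmash k H A B act ιA ιH e)
    (qact : Q →ₗ[k] B →ₗ[k] B) (hq : IsModAlg k Q B qact)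
    (hfix : ∀ (q : Q) (a : A), qact q (ιA a) = Coalgebra.counit (R := k) q • ιA a)
    (q : Q) (a : A) :
    LinearMap.mulRight k (ιA a) ∘ₗ (qact q ∘ₗ ιH.toLinearMap)
      = conv k (ιA.toLinearMap ∘ₗ act.flip a) (qact q ∘ₗ ιH.toLinearMap) := by
  ext h
  set r := Coalgebra.Repr.arbitrary k h with hrdef
  have h1 := LinearMap.congr_fun (straighten_pointwise k H A B act ιA ιH e hs a) h
  rw [LinearMap.comp_apply, LinearMap.mulRight_apply, conv_repr k _ _ h r] at h1
  simp only [LinearMap.comp_apply, LinearMap.flip_apply, AlgHom.toLinearMap_apply] at h1 ⊢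
  rw [LinearMap.mulRight_apply, ← qact_fix_right k A B Q qact hq ιA hfix q (ιH h) a, h1,
    map_sum, conv_repr k _ _ h r]
  simp only [LinearMap.comp_apply, LinearMap.flip_apply, AlgHom.toLinearMap_apply]
  exact Finset.sum_congr rfl fun i _ => qact_fix_left k A B Q qact hq ιA hfix q _ _

end SmashLemmas

/-- If a Hopf algebra `Q` acts on the smash product `A ⋊ H` as a module
algebra fixing `A` pointwise, then for all `q ∈ Q`, `h ∈ H`, the element
`V⁻¹(h₁)·(q·(1 ⋊ h₂))` lies in the commutant of `A` in `A ⋊ H`. -/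
theorem stmt2 (act : H →ₗ[k] A →ₗ[k] A) (ιA : A →ₐ[k] B) (ιH : H →ₐ[k] B)
    (e : A ⊗[k] H ≃ₗ[k] B) (hs : IsSmash k H A B act ιA ιH e)
    (Q : Type*) [Ring Q] [HopfAlgebra k Q]
    (qact : Q →ₗ[k] B →ₗ[k] B) (hq : IsModAlg k Q B qact)
    (hfix : ∀ (q : Q) (a : A), qact q (ιA a) = Coalgebra.counit (R := k) q • ιA a) :
    ∀ (q : Q) (h : H),
      conv k (ιH.toLinearMap ∘ₗ HopfAlgebra.antipode (R := k)) (qact q ∘ₗ ιH.toLinearMap) h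
        ∈ Subalgebra.centralizer k (Set.range ⇑ιA) := by
  intro q h
  rw [Subalgebra.mem_centralizer_iff]
  rintro y ⟨a, rfl⟩
  set σ : H →ₗ[k] B := ιH.toLinearMap ∘ₗ HopfAlgebra.antipode (R := k) with hσ
  set ι : H →ₗ[k] B := ιH.toLinearMap with hι
  set β : H →ₗ[k] B := qact q ∘ₗ ιH.toLinearMap with hβ
  set α : H →ₗ[k] B := ιA.toLinearMap ∘ₗ act.flip a with hα
  set c : B := ιA a with hc
  have hσι : conv k σ ι = cunit k := conv_antipode k ιH
  have hισ : conv k ι σ = cunit k := antipode_conv k ιH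
  have hαι : conv k α ι = LinearMap.mulRight k c ∘ₗ ι :=
    (straighten_pointwise k H A B act ιA ιH e hs a).symm
  have hαβ : conv k α β = LinearMap.mulRight k c ∘ₗ β :=
    (step2 k H A B Q act ιA ιH e hs qact hq hfix q a).symm
  have L5 : conv k σ α = LinearMap.mulLeft k c ∘ₗ σ := by
    have e1 : conv k (conv k σ α) ι = conv k (LinearMap.mulLeft k c ∘ₗ σ) ι := by
      rw [conv_assoc, hαι, conv_mulRight, hσι, conv_mulLeft, hσι, mulRight_cunit]
    calc conv k σ α = conv k (conv k σ α) (cunit k) := (conv_cunit k _).symm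
      _ = conv k (conv k σ α) (conv k ι σ) := by rw [hισ]
      _ = conv k (conv k (conv k σ α) ι) σ := (conv_assoc k _ _ _).symm
      _ = conv k (conv k (LinearMap.mulLeft k c ∘ₗ σ) ι) σ := by rw [e1]
      _ = conv k (LinearMap.mulLeft k c ∘ₗ σ) (conv k ι σ) := conv_assoc k _ _ _
      _ = conv k (LinearMap.mulLeft k c ∘ₗ σ) (cunit k) := by rw [hισ]
      _ = LinearMap.mulLeft k c ∘ₗ σ := conv_cunit k _
  have main : LinearMap.mulRight k c ∘ₗ conv k σ β = LinearMap.mulLeft k c ∘ₗ conv k σ β := by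
    rw [← conv_mulRight, ← hαβ, ← conv_assoc, L5, conv_mulLeft]
  exact (LinearMap.congr_fun main h).symm

end
end

section
/- Let H be a Hopf algebra with bijective antipode and A a left H-module algebra such that for all h, the element 1 ⋊ h normalizes A in A ⋊ H. Then the assignment a ⋊ h ↦ (a ⋊ h₁)ψ(h₂) defines an A-bimodule endomorphism of A ⋊ H for every linear map ψ : H → A′ ∩ (A ⋊ H) (with A′ the commutant of A); i.e. it commutes with left and right multiplication by elements a ⋊ 1, a ∈ A. -/
open TensorProduct LinearMap

noncomputable section

variable (k : Type*) [Field k]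

variable (H A : Type*) [Ring H] [HopfAlgebra k H] [Ring A] [Algebra k A]

variable (B : Type*) [Ring B] [Algebra k B]

set_option maxHeartbeats 1600000 in
set_option synthInstance.maxHeartbeats 400000 in
/-- If the antipode of `H` is bijective, then for any linear map
`ψ : H → A′ ∩ (A ⋊ H)`, the map `a ⋊ h ↦ (a ⋊ h₁) ψ(h₂)` is an `A`-bimodule endomorphism
of the smash product `A ⋊ H`. -/
theorem stmt14 (act : H →ₗ[k] A →ₗ[k] A) (ιA : A →ₐ[k] B) (ιH : H →ₐ[k] B)
    (e : A ⊗[k] H ≃ₗ[k] B) (hs : IsSmash k H A B act ιA ιH e)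
    (hbij : Function.Bijective (HopfAlgebra.antipode (R := k) (A := H))) :
    ∀ ψ : H →ₗ[k] (Subalgebra.centralizer k (Set.range ⇑ιA) : Subalgebra k B),
      inducedEnd k H A B ιA ιH e
          ((Subalgebra.centralizer k (Set.range ⇑ιA)).val.toLinearMap ∘ₗ ψ)
        ∈ bimodEnd k A B ιA := by
  intro ψ
  set ψ' : H →ₗ[k] B :=
    (Subalgebra.centralizer k (Set.range ⇑ιA)).val.toLinearMap ∘ₗ ψ with hψ'
  have hcomm : ∀ (g : H) (c : A), ψ' g * ιA c = ιA c * ψ' g := by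
    intro g c
    exact ((Subalgebra.mem_centralizer_iff k).mp (ψ g).2 (ιA c) ⟨c, rfl⟩).symm
  set W : A ⊗[k] (H ⊗[k] H) →ₗ[k] B :=
    LinearMap.mul' k B
      ∘ₗ TensorProduct.map
          (LinearMap.mul' k B ∘ₗ TensorProduct.map ιA.toLinearMap ιH.toLinearMap) ψ'
      ∘ₗ (TensorProduct.assoc k A H H).symm.toLinearMap with hW
  have hWt : ∀ (c : A) (g1 g2 : H),
      W (c ⊗ₜ[k] (g1 ⊗ₜ[k] g2)) = (ιA c * ιH g1) * ψ' g2 := by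
    intro c g1 g2; simp [hW]
  have hΦe : ∀ y : A ⊗[k] H,
      inducedEnd k H A B ιA ιH e ψ' (e y)
        = W (lTensor A (Coalgebra.comul (R := k)) y) := by
    intro y; simp [inducedEnd, hW]
  intro a x
  -- straightening at the element level
  set St : H ⊗[k] H →ₗ[k] B :=
    LinearMap.mul' k B
      ∘ₗ TensorProduct.map (ιA.toLinearMap ∘ₗ act.flip a) ιH.toLinearMap with hSt
  have hStt : ∀ g1 g2 : H, St (g1 ⊗ₜ[k] g2) = ιA (act g1 a) * ιH g2 := by
    intro g1 g2; simp [hSt]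
  have st_eq : ∀ g : H, ιH g * ιA a = St (Coalgebra.comul (R := k) g) := by
    intro g
    have h0 := LinearMap.congr_fun hs.straighten (g ⊗ₜ[k] a)
    simp only [LinearMap.comp_apply, LinearEquiv.coe_coe, TensorProduct.map_tmul,
      LinearMap.mul'_apply, AlgHom.toLinearMap_apply, rTensor_tmul] at h0
    rw [h0]
    generalize Coalgebra.comul (R := k) g = z
    induction z using TensorProduct.induction_on with
    | zero => simp
    | tmul z1 z2 => simp [hSt, actU]
    | add u v hu hv => simp only [TensorProduct.add_tmul, map_add, hu, hv]
  rw [← e.apply_symm_apply x]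
  generalize e.symm x = y
  induction y using TensorProduct.induction_on with
  | zero => simp
  | add u v hu hv =>
    constructor
    · have := hu.1; have := hv.1
      simp only [map_add, mul_add, hu.1, hv.1]
    · simp only [map_add, add_mul, hu.2, hv.2]
  | tmul b h =>
    constructor
    · -- left A-linearity
      have hb1 : ιA a * e (b ⊗ₜ[k] h) = e ((a * b) ⊗ₜ[k] h) := by
        rw [hs.e_tmul, hs.e_tmul, map_mul, mul_assoc]
      rw [hb1, hΦe, hΦe]
      simp only [lTensor_tmul]
      generalize Coalgebra.comul (R := k) h = z
      induction z using TensorProduct.induction_on with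
      | zero => simp
      | tmul g1 g2 => simp [hWt, map_mul, mul_assoc]
      | add u v hu hv => simp only [TensorProduct.tmul_add, map_add, mul_add, hu, hv]
    · -- right A-linearity
      set Q : (H ⊗[k] H) ⊗[k] H →ₗ[k] B :=
        LinearMap.mul' k B
          ∘ₗ TensorProduct.map (LinearMap.mulLeft k (ιA b) ∘ₗ St) ψ' with hQ
      have hQt : ∀ (z : H ⊗[k] H) (g : H),
          Q (z ⊗ₜ[k] g) = (ιA b * St z) * ψ' g := by
        intro z g; simp [hQ]
      set G : H ⊗[k] H →ₗ[k] A ⊗[k] H :=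
        TensorProduct.map (LinearMap.mulLeft k b ∘ₗ act.flip a) LinearMap.id with hG
      have hbSt : ∀ z : H ⊗[k] H, ιA b * St z = e (G z) := by
        intro z
        induction z using TensorProduct.induction_on with
        | zero => simp
        | tmul g1 g2 =>
          simp only [hStt, hG, TensorProduct.map_tmul, LinearMap.comp_apply,
            LinearMap.mulLeft_apply, LinearMap.id_apply, LinearMap.flip_apply,
            hs.e_tmul, map_mul, mul_assoc]
        | add u v hu hv => simp only [map_add, mul_add, hu, hv]
      have heGa : e (b ⊗ₜ[k] h) * ιA a = e (G (Coalgebra.comul (R := k) h)) := by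
        rw [hs.e_tmul, mul_assoc, st_eq, hbSt]
      have key : ∀ z : H ⊗[k] H,
          W (lTensor A (Coalgebra.comul (R := k)) (G z))
            = Q ((TensorProduct.assoc k H H H).symm
                (lTensor H (Coalgebra.comul (R := k)) z)) := by
        intro z
        induction z using TensorProduct.induction_on with
        | zero => simp
        | tmul g1 g2 =>
          simp only [hG, TensorProduct.map_tmul, LinearMap.comp_apply,
            LinearMap.mulLeft_apply, LinearMap.id_apply, LinearMap.flip_apply,
            lTensor_tmul]
          generalize Coalgebra.comul (R := k) g2 = z
          induction z using TensorProduct.induction_on with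
          | zero => simp
          | tmul z1 z2 =>
            simp only [TensorProduct.assoc_symm_tmul, hWt, hQt, hStt, map_mul,
              mul_assoc]
          | add u v hu hv =>
            simp only [TensorProduct.tmul_add, map_add, hu, hv]
        | add u v hu hv => simp only [map_add, hu, hv]
      have key2 : ∀ z : H ⊗[k] H,
          W (b ⊗ₜ[k] z) * ιA a = Q (rTensor H (Coalgebra.comul (R := k)) z) := by
        intro z
        induction z using TensorProduct.induction_on with
        | zero => simp
        | tmul g1 g2 =>
          rw [rTensor_tmul, hWt, hQt, mul_assoc, hcomm, ← mul_assoc, mul_assoc (ιA b),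
            st_eq]
        | add u v hu hv =>
          simp only [TensorProduct.tmul_add, map_add, add_mul, hu, hv]
      calc inducedEnd k H A B ιA ιH e ψ' (e (b ⊗ₜ[k] h) * ιA a)
          = W (lTensor A (Coalgebra.comul (R := k))
              (G (Coalgebra.comul (R := k) h))) := by rw [heGa, hΦe]
        _ = Q ((TensorProduct.assoc k H H H).symm
              (lTensor H (Coalgebra.comul (R := k)) (Coalgebra.comul (R := k) h))) :=
            key _
        _ = Q (rTensor H (Coalgebra.comul (R := k)) (Coalgebra.comul (R := k) h)) := by
            rw [Coalgebra.coassoc_symm_apply]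
        _ = W (b ⊗ₜ[k] Coalgebra.comul (R := k) h) * ιA a := (key2 _).symm
        _ = inducedEnd k H A B ιA ιH e ψ' (e (b ⊗ₜ[k] h)) * ιA a := by
            rw [hΦe]; simp only [lTensor_tmul]

end
end
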